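/- Let n ≥ 2 and κ ∈ ℝ. Then, as v → 0⁺, the model isoperimetric profile satisfies I_κ(v) = n^{(n−1)/n}·ω_{n−1}^{1/n}·v^{(n−1)/n} − ((n−1)κ/(2(n+2)))·(n^{(n+1)/n}/ω_{n−1}^{1/n})·v^{(n+1)/n} + O(v^{(n+3)/n}); that is, the difference between I_κ(v) and the two displayed terms is O(v^{(n+3)/n}) as v → 0⁺. -/

import Mathlib

open Real MeasureTheory Filter Asymptotics

/-- Inverse hyperbolic tangent. -/
noncomputable def artanh (y : ℝ) : ℝ := Real.log ((1 + y) / (1 - y)) / 2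

/-- The generalized sine function `sin_κ`. -/
noncomputable def sinK (κ t : ℝ) : ℝ :=
  if 0 < κ then Real.sin (Real.sqrt κ * t) / Real.sqrt κ
  else if κ < 0 then Real.sinh (Real.sqrt (-κ) * t) / Real.sqrt (-κ)
  else t

/-- The generalized cosine function `cos_κ = sin_κ'`. -/
noncomputable def cosK (κ t : ℝ) : ℝ :=
  if 0 < κ then Real.cos (Real.sqrt κ * t)
  else if κ < 0 then Real.cosh (Real.sqrt (-κ) * t)
  else 1

/-- The generalized tangent function `tan_κ`. -/
noncomputable def tanK (κ t : ℝ) : ℝ := sinK κ t / cosK κ t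

/-- The inverse function `arctan_κ` of `tan_κ`. -/
noncomputable def arctanK (κ x : ℝ) : ℝ :=
  if 0 < κ then Real.arctan (Real.sqrt κ * x) / Real.sqrt κ
  else if κ < 0 then _root_.artanh (Real.sqrt (-κ) * x) / Real.sqrt (-κ)
  else x

/-- `ω_{n-1}`, the (n-1)-volume of the unit sphere of ℝⁿ, i.e. `n` times the
volume of the unit ball. -/
noncomputable def omegaS (n : ℕ) : ℝ :=
  n * (volume (Metric.ball (0 : EuclideanSpace ℝ (Fin n)) 1)).toReal

/-- `A_κ(t)`: the volume of a geodesic sphere of radius `t` in the model space. -/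
noncomputable def AK (n : ℕ) (κ t : ℝ) : ℝ := omegaS n * sinK κ t ^ (n - 1)

/-- `V_κ(t)`: the volume of a geodesic ball of radius `t` in the model space. -/
noncomputable def VK (n : ℕ) (κ t : ℝ) : ℝ := omegaS n * ∫ s in (0:ℝ)..t, sinK κ s ^ (n - 1)

/-- The natural domain of `V_κ`: `[0, π/√κ)` when `κ > 0` and `[0, ∞)` otherwise. -/
noncomputable def domK (κ : ℝ) : Set ℝ :=
  if 0 < κ then Set.Ico 0 (Real.pi / Real.sqrt κ) else Set.Ici 0

/-- The range of `V_κ` (on its natural domain). -/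
noncomputable def rangeVK (n : ℕ) (κ : ℝ) : Set ℝ := VK n κ '' domK κ

/-- The inverse of `V_κ` on its natural domain. -/
noncomputable def VKinv (n : ℕ) (κ v : ℝ) : ℝ := sInf {t : ℝ | t ∈ domK κ ∧ VK n κ t = v}

/-- The isoperimetric profile `I_κ = A_κ ∘ V_κ⁻¹` of the model space. -/
noncomputable def IK (n : ℕ) (κ v : ℝ) : ℝ := AK n κ (VKinv n κ v)

/-!
Parametrize small volumes by the radius, `v = V_κ(t)`, so that `I_κ(v) = A_κ(t)`.
From `sin_κ t = t - κt³/6 + O(t⁵)` one gets `A_κ(t) = ω tⁿ⁻¹ (1 - (n-1)κt²/6 + O(t⁴))` and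
`V_κ(t) = (ω tⁿ/n) (1 + b t² + O(t⁴))` with `b = -n(n-1)κ/(6(n+2))`. Substituting `V_κ(t)` into
the two-term expansion and using `(1 + x)^a = 1 + a x + O(x²)`, the `t²` terms cancel, leaving
`O(tⁿ⁺³) = O(v^((n+3)/n))`.
-/

open Topology

theorem isBigO_pow_succ_of_hasDerivAt {E : Type*} [NormedAddCommGroup E] [NormedSpace ℝ E]
    {f f' : ℝ → E} {k : ℕ} (hf : ∀ᶠ x in 𝓝 0, HasDerivAt f (f' x) x) (hf0 : f 0 = 0)
    (hf' : f' =O[𝓝 0] fun x => x ^ k) : f =O[𝓝 0] fun x => x ^ (k + 1) := by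
  obtain ⟨C, hC0, hC⟩ := hf'.exists_pos
  obtain ⟨ε, hε, hball⟩ := Metric.eventually_nhds_iff_ball.mp (hf.and hC.bound)
  refine IsBigO.of_bound C ?_
  filter_upwards [Metric.ball_mem_nhds 0 hε] with x hx
  have hsub : Metric.closedBall (0 : ℝ) ‖x‖ ⊆ Metric.ball 0 ε :=
    Metric.closedBall_subset_ball (by simpa using hx)
  have hmvt := Convex.norm_image_sub_le_of_norm_hasDerivWithin_le
    (fun y hy => (hball y (hsub hy)).1.hasDerivWithinAt)
    (C := C * ‖x‖ ^ k) (fun y hy => (hball y (hsub hy)).2.trans <| by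
      rw [norm_pow]
      gcongr
      simpa using hy)
    (convex_closedBall (0 : ℝ) ‖x‖) (Metric.mem_closedBall_self (norm_nonneg x))
    (show x ∈ Metric.closedBall (0 : ℝ) ‖x‖ by simp)
  simpa [hf0, norm_pow, pow_succ, mul_assoc] using hmvt

theorem one_add_rpow_sub_sub_mul_isBigO (a : ℝ) :
    (fun x : ℝ => (1 + x) ^ a - 1 - a * x) =O[𝓝 0] fun x => x ^ 2 := by
  have hderiv : ∀ (b x : ℝ), 1 + x ≠ 0 →
      HasDerivAt (fun x : ℝ => (1 + x) ^ b) (b * (1 + x) ^ (b - 1)) x := fun b x hx => by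
    simpa using ((hasDerivAt_id x).const_add 1).rpow_const (p := b) (Or.inl hx)
  have hne : ∀ᶠ x : ℝ in 𝓝 0, 1 + x ≠ 0 :=
    (continuous_const.add continuous_id).continuousAt.eventually_ne (by norm_num)
  refine isBigO_pow_succ_of_hasDerivAt (f' := fun x => a * (1 + x) ^ (a - 1) - a)
    (hne.mono fun x hx => ((hderiv a x hx).sub_const 1).sub
      (by simpa using (hasDerivAt_id x).const_mul a))
    (by simp) ?_
  simpa using ((hderiv (a - 1) 0 (by norm_num)).const_mul a).isBigO_sub

theorem isBigO_nhds_of_nhdsNE {α E F : Type*} [TopologicalSpace α] [NormedAddCommGroup E]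
    [NormedAddCommGroup F] {f : α → E} {g : α → F} {x : α} (h : f =O[𝓝[≠] x] g) (hx : f x = 0) :
    f =O[𝓝 x] g := by
  rw [← nhdsNE_sup_pure]
  exact h.sup (isBigO_pure.2 fun _ => hx)

theorem isBigO_div_pow {l : Filter ℝ} {f : ℝ → ℝ} {j k : ℕ} (hl : ∀ᶠ t in l, t ≠ 0)
    (h : f =O[l] fun t => t ^ (k + j)) : (fun t => f t / t ^ k) =O[l] fun t => t ^ j := by
  refine (h.mul (isBigO_refl (fun t => (t ^ k)⁻¹) l)).congr' (.of_forall fun t => rfl) ?_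
  filter_upwards [hl] with t ht
  field_simp
  ring

theorem rpow_sub_isBigO_of_sub_isBigO {α : Type*} {l : Filter α} {w s : α → ℝ} {b : ℝ} (a : ℝ)
    (hs : Tendsto s l (𝓝 0)) (hw : (fun x => w x - (1 + b * s x)) =O[l] fun x => s x ^ 2) :
    (fun x => w x ^ a - (1 + a * b * s x)) =O[l] fun x => s x ^ 2 := by
  have hsq : (fun x => s x ^ 2) =O[l] s := by
    simpa [sq] using (isBigO_refl s l).mul (hs.isBigO_one ℝ)
  have hw1 : (fun x => w x - 1) =O[l] s :=
    ((hw.trans hsq).add ((isBigO_refl s l).const_mul_left b)).congr_left fun x => by ring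
  have htaylor := (one_add_rpow_sub_sub_mul_isBigO a).comp_tendsto (hw1.trans_tendsto hs)
  refine ((htaylor.trans (hw1.pow 2)).add (hw.const_mul_left a)).congr_left fun x => ?_
  simp only [Function.comp_apply, add_sub_cancel]
  ring

theorem hasDerivAt_sinK (κ t : ℝ) : HasDerivAt (sinK κ) (cosK κ t) t := by
  rcases lt_trichotomy κ 0 with hκ | rfl | hκ
  · have hs : sinK κ = fun t => Real.sinh (√(-κ) * t) / √(-κ) :=
      funext fun t => by simp [sinK, hκ, hκ.not_gt]
    have hr : √(-κ) ≠ 0 := (Real.sqrt_pos.2 (neg_pos.2 hκ)).ne'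
    rw [hs, cosK, if_neg hκ.not_gt, if_pos hκ]
    refine (((hasDerivAt_id' t).const_mul √(-κ)).sinh.div_const √(-κ)).congr_deriv ?_
    field_simp
  · have hs : sinK 0 = id := funext fun t => by simp [sinK]
    simpa [hs, cosK] using hasDerivAt_id t
  · have hs : sinK κ = fun t => Real.sin (√κ * t) / √κ := funext fun t => by simp [sinK, hκ]
    have hr : √κ ≠ 0 := (Real.sqrt_pos.2 hκ).ne'
    rw [hs, cosK, if_pos hκ]
    refine (((hasDerivAt_id' t).const_mul √κ).sin.div_const √κ).congr_deriv ?_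
    field_simp

theorem hasDerivAt_cosK (κ t : ℝ) : HasDerivAt (cosK κ) (-κ * sinK κ t) t := by
  rcases lt_trichotomy κ 0 with hκ | rfl | hκ
  · have hc : cosK κ = fun t => Real.cosh (√(-κ) * t) :=
      funext fun t => by simp [cosK, hκ, hκ.not_gt]
    have hr : 0 < √(-κ) := Real.sqrt_pos.2 (neg_pos.2 hκ)
    rw [hc, sinK, if_neg hκ.not_gt, if_pos hκ]
    refine ((hasDerivAt_id' t).const_mul √(-κ)).cosh.congr_deriv ?_
    field_simp
    rw [Real.sq_sqrt (neg_nonneg.2 hκ.le)]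
    ring
  · have hc : cosK 0 = fun _ => 1 := funext fun t => by simp [cosK]
    simpa [hc] using hasDerivAt_const t (1 : ℝ)
  · have hc : cosK κ = fun t => Real.cos (√κ * t) := funext fun t => by simp [cosK, hκ]
    have hr : 0 < √κ := Real.sqrt_pos.2 hκ
    rw [hc, sinK, if_pos hκ]
    refine ((hasDerivAt_id' t).const_mul √κ).cos.congr_deriv ?_
    field_simp
    rw [Real.sq_sqrt hκ.le]
    ring

@[simp] theorem sinK_zero (κ : ℝ) : sinK κ 0 = 0 := by simp [sinK]

@[simp] theorem cosK_zero (κ : ℝ) : cosK κ 0 = 1 := by simp [cosK]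

theorem continuous_sinK (κ : ℝ) : Continuous (sinK κ) :=
  continuous_iff_continuousAt.2 fun t => (hasDerivAt_sinK κ t).continuousAt

/-- Each use of `sin_κ' = cos_κ` or `cos_κ' = -κ sin_κ` gains one order of vanishing at `0`. -/
theorem sinK_sub_isBigO (κ : ℝ) :
    (fun t => sinK κ t - (t - κ * t ^ 3 / 6)) =O[𝓝 0] fun t => t ^ 5 := by
  have h1 : sinK κ =O[𝓝 0] fun t => t ^ 1 :=
    isBigO_pow_succ_of_hasDerivAt (.of_forall (hasDerivAt_sinK κ)) (sinK_zero κ)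
      (by simpa using (hasDerivAt_cosK κ 0).continuousAt.tendsto.isBigO_one ℝ)
  have h2 : (fun t => cosK κ t - 1) =O[𝓝 0] fun t => t ^ 2 :=
    isBigO_pow_succ_of_hasDerivAt (.of_forall fun t => (hasDerivAt_cosK κ t).sub_const 1)
      (by simp) (h1.const_mul_left (-κ))
  have h3 : (fun t => sinK κ t - t) =O[𝓝 0] fun t => t ^ 3 :=
    isBigO_pow_succ_of_hasDerivAt (.of_forall fun t => (hasDerivAt_sinK κ t).sub (hasDerivAt_id' t))
      (by simp) h2
  have h4 : (fun t => cosK κ t - (1 - κ * t ^ 2 / 2)) =O[𝓝 0] fun t => t ^ 4 := by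
    refine isBigO_pow_succ_of_hasDerivAt (f' := fun t => -κ * (sinK κ t - t))
      (.of_forall fun t => ?_) (by simp) (h3.const_mul_left (-κ))
    refine ((hasDerivAt_cosK κ t).sub
      ((((hasDerivAt_pow 2 t).const_mul κ).div_const 2).const_sub 1)).congr_deriv ?_
    push_cast
    ring
  refine isBigO_pow_succ_of_hasDerivAt (.of_forall fun t => ?_) (by simp) h4
  refine ((hasDerivAt_sinK κ t).sub
    ((hasDerivAt_id' t).sub (((hasDerivAt_pow 3 t).const_mul κ).div_const 6))).congr_deriv ?_
  push_cast
  ring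

theorem tendsto_sq_nhdsNE_zero : Tendsto (fun t : ℝ => t ^ 2) (𝓝[≠] 0) (𝓝 0) :=
  ((continuous_pow 2).tendsto' 0 0 (by simp)).mono_left nhdsWithin_le_nhds

theorem sinK_pow_sub_isBigO (m : ℕ) (κ : ℝ) :
    (fun t => sinK κ t ^ m - t ^ m * (1 - m * κ * t ^ 2 / 6)) =O[𝓝 0] fun t => t ^ (m + 4) := by
  have hne : ∀ᶠ t in 𝓝[≠] (0 : ℝ), t ≠ 0 := self_mem_nhdsWithin
  have hratio : (fun t => sinK κ t / t ^ 1 - (1 + -κ / 6 * t ^ 2)) =O[𝓝[≠] 0]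
      fun t => (t ^ 2) ^ 2 := by
    refine (isBigO_div_pow (k := 1) (j := 4) hne
      ((sinK_sub_isBigO κ).mono nhdsWithin_le_nhds)).congr' ?_ (.of_forall fun t => by ring)
    filter_upwards [hne] with t ht
    field_simp
    ring
  have hpow := (isBigO_refl (fun t : ℝ => t ^ m) _).mul
    (rpow_sub_isBigO_of_sub_isBigO m tendsto_sq_nhdsNE_zero hratio)
  refine isBigO_nhds_of_nhdsNE (hpow.congr' ?_ (.of_forall fun t => by ring)) (by simp)
  filter_upwards [hne] with t ht
  rw [Real.rpow_natCast, pow_one, div_pow]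
  field_simp
  ring

theorem omegaS_pos {n : ℕ} (hn : n ≠ 0) : 0 < omegaS n :=
  mul_pos (Nat.cast_pos.2 (Nat.pos_of_ne_zero hn))
    (ENNReal.toReal_pos (Metric.measure_ball_pos _ _ one_pos).ne' measure_ball_lt_top.ne)

theorem hasDerivAt_VK (n : ℕ) (κ t : ℝ) :
    HasDerivAt (VK n κ) (omegaS n * sinK κ t ^ (n - 1)) t :=
  (((continuous_sinK κ).pow _).integral_hasStrictDerivAt 0 t).hasDerivAt.const_mul _

theorem continuous_VK (n : ℕ) (κ : ℝ) : Continuous (VK n κ) :=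
  continuous_iff_continuousAt.2 fun t => (hasDerivAt_VK n κ t).continuousAt

@[simp] theorem VK_zero (n : ℕ) (κ : ℝ) : VK n κ 0 = 0 := by simp [VK]

theorem VK_sub_isBigO (m : ℕ) (κ : ℝ) :
    (fun t => VK (m + 1) κ t -
        omegaS (m + 1) * (t ^ (m + 1) / (m + 1) - m * κ * t ^ (m + 3) / (6 * (m + 3))))
      =O[𝓝 0] fun t => t ^ (m + 5) := by
  refine isBigO_pow_succ_of_hasDerivAt (k := m + 4) (.of_forall fun t => ?_) (by simp)
    ((sinK_pow_sub_isBigO m κ).const_mul_left (omegaS (m + 1)))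
  refine ((hasDerivAt_VK (m + 1) κ t).sub ((((hasDerivAt_pow (m + 1) t).div_const _).sub
    (((hasDerivAt_pow (m + 3) t).const_mul _).div_const _)).const_mul _)).congr_deriv ?_
  simp only [Nat.add_sub_cancel]
  push_cast
  field_simp
  ring

noncomputable def VKRatio (n : ℕ) (κ t : ℝ) : ℝ := VK n κ t / (omegaS n / n * t ^ n)

theorem VK_eq_mul_VKRatio {n : ℕ} (hn : n ≠ 0) (κ : ℝ) {t : ℝ} (ht : t ≠ 0) :
    VK n κ t = omegaS n / n * t ^ n * VKRatio n κ t := by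
  have := (omegaS_pos hn).ne'
  rw [VKRatio, mul_div_cancel₀]
  positivity

theorem VKRatio_sub_isBigO (m : ℕ) (κ : ℝ) :
    (fun t => VKRatio (m + 1) κ t - (1 + -((m + 1) * m * κ / (6 * (m + 3))) * t ^ 2))
      =O[𝓝[≠] 0] fun t => (t ^ 2) ^ 2 := by
  have hne : ∀ᶠ t in 𝓝[≠] (0 : ℝ), t ≠ 0 := self_mem_nhdsWithin
  have hω := (omegaS_pos m.add_one_ne_zero).ne'
  refine ((isBigO_div_pow (k := m + 1) (j := 4) hne ((VK_sub_isBigO m κ).mono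
    nhdsWithin_le_nhds)).const_mul_left ((m + 1) / omegaS (m + 1))).congr' ?_
    (.of_forall fun t => by ring)
  filter_upwards [hne] with t ht
  rw [VKRatio]
  push_cast
  field_simp
  ring

theorem tendsto_VKRatio (m : ℕ) (κ : ℝ) : Tendsto (VKRatio (m + 1) κ) (𝓝[≠] 0) (𝓝 1) := by
  have hpoly : Tendsto (fun t : ℝ => 1 + -((m + 1) * m * κ / (6 * (m + 3))) * t ^ 2)
      (𝓝[≠] 0) (𝓝 1) := by
    simpa only [mul_zero, add_zero] using (tendsto_sq_nhdsNE_zero.const_mul _).const_add 1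
  have hdiff := (VKRatio_sub_isBigO m κ).trans_tendsto
    (by simpa using tendsto_sq_nhdsNE_zero.pow 2)
  simpa using hdiff.add hpoly

theorem mem_domK {κ t : ℝ} : t ∈ domK κ ↔ 0 ≤ t ∧ (0 < κ → t < π / √κ) := by
  unfold domK
  split_ifs with hκ <;> simp [hκ]

theorem domK_mem_nhdsGE (κ : ℝ) : domK κ ∈ 𝓝[≥] 0 := by
  unfold domK
  split_ifs with hκ
  · exact Ico_mem_nhdsGE (div_pos pi_pos (Real.sqrt_pos.2 hκ))
  · exact self_mem_nhdsWithin

theorem sinK_pos {κ t : ℝ} (ht : t ∈ domK κ) (ht0 : 0 < t) : 0 < sinK κ t := by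
  rw [mem_domK] at ht
  rcases lt_trichotomy κ 0 with hκ | rfl | hκ
  · have hr := Real.sqrt_pos.2 (neg_pos.2 hκ)
    simp only [sinK, hκ.not_gt, hκ, if_false, if_true]
    exact div_pos (Real.sinh_pos_iff.2 (mul_pos hr ht0)) hr
  · simpa [sinK] using ht0
  · have hr := Real.sqrt_pos.2 hκ
    simp only [sinK, hκ, if_true]
    refine div_pos (Real.sin_pos_of_pos_of_lt_pi (mul_pos hr ht0) ?_) hr
    simpa [lt_div_iff₀' hr] using ht.2 hκ

theorem strictMonoOn_VK {n : ℕ} (hn : n ≠ 0) (κ : ℝ) : StrictMonoOn (VK n κ) (domK κ) := by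
  intro t₁ ht₁ t₂ ht₂ h
  have hint : ∀ a b, IntervalIntegrable (fun s => sinK κ s ^ (n - 1)) volume a b :=
    fun a b => ((continuous_sinK κ).pow _).intervalIntegrable a b
  have hpos : 0 < ∫ s in t₁..t₂, sinK κ s ^ (n - 1) := by
    refine intervalIntegral.intervalIntegral_pos_of_pos_on (hint _ _) (fun s hs => ?_) h
    have hs0 : 0 < s := (mem_domK.1 ht₁).1.trans_lt hs.1
    have hs_dom : s ∈ domK κ := mem_domK.2 ⟨hs0.le, fun hκ => hs.2.trans ((mem_domK.1 ht₂).2 hκ)⟩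
    exact pow_pos (sinK_pos hs_dom hs0) _
  unfold VK
  rw [← intervalIntegral.integral_add_adjacent_intervals (hint 0 t₁) (hint t₁ t₂)]
  exact mul_lt_mul_of_pos_left (lt_add_of_pos_right _ hpos) (omegaS_pos hn)

theorem VKinv_VK {n : ℕ} (hn : n ≠ 0) {κ t : ℝ} (ht : t ∈ domK κ) : VKinv n κ (VK n κ t) = t := by
  have hset : {s | s ∈ domK κ ∧ VK n κ s = VK n κ t} = {t} := by
    ext s
    exact ⟨fun hs => (strictMonoOn_VK hn κ).injOn hs.1 ht hs.2, by rintro rfl; exact ⟨ht, rfl⟩⟩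
  rw [VKinv, hset, csInf_singleton]

theorem eventually_VKinv_mem_Ioo {n : ℕ} (hn : n ≠ 0) (κ : ℝ) {δ : ℝ} (hδ : 0 < δ) :
    ∀ᶠ v in 𝓝[>] 0, VKinv n κ v ∈ Set.Ioo 0 δ ∧ VK n κ (VKinv n κ v) = v := by
  have hdom : ∀ᶠ t in 𝓝[>] (0 : ℝ), t ∈ domK κ :=
    nhdsWithin_mono 0 Set.Ioi_subset_Ici_self (domK_mem_nhdsGE κ)
  obtain ⟨δ', hδ'_dom, hδ'⟩ := (hdom.and (Ioo_mem_nhdsGT hδ)).exists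
  have h0 : (0 : ℝ) ∈ domK κ := mem_of_mem_nhdsWithin Set.self_mem_Ici (domK_mem_nhdsGE κ)
  have hVδ : 0 < VK n κ δ' := by simpa using strictMonoOn_VK hn κ h0 hδ'_dom hδ'.1
  filter_upwards [Ioo_mem_nhdsGT hVδ] with v hv
  obtain ⟨t, ht, rfl⟩ := intermediate_value_Ioo hδ'.1.le (continuous_VK n κ).continuousOn
    (by simpa using hv)
  have ht_dom : t ∈ domK κ :=
    mem_domK.2 ⟨ht.1.le, fun hκ => ht.2.trans ((mem_domK.1 hδ'_dom).2 hκ)⟩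
  rw [VKinv_VK hn ht_dom]
  exact ⟨⟨ht.1, ht.2.trans hδ'.2⟩, rfl⟩

theorem tendsto_VKinv {n : ℕ} (hn : n ≠ 0) (κ : ℝ) : Tendsto (VKinv n κ) (𝓝[>] 0) (𝓝[>] 0) :=
  (nhdsGT_basis 0).tendsto_right_iff.2 fun _ hδ =>
    (eventually_VKinv_mem_Ioo hn κ hδ).mono fun _ hv => hv.1

noncomputable def IKApprox (n : ℕ) (κ v : ℝ) : ℝ :=
  (n : ℝ) ^ (((n : ℝ) - 1) / (n : ℝ)) * omegaS n ^ ((1 : ℝ) / (n : ℝ)) *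
      v ^ (((n : ℝ) - 1) / (n : ℝ)) -
    (((n : ℝ) - 1) * κ / (2 * ((n : ℝ) + 2))) *
      ((n : ℝ) ^ (((n : ℝ) + 1) / (n : ℝ)) / omegaS n ^ ((1 : ℝ) / (n : ℝ))) *
      v ^ (((n : ℝ) + 1) / (n : ℝ))

theorem mul_pow_mul_rpow {c t w : ℝ} (n : ℕ) (a : ℝ) (hc : 0 ≤ c) (ht : 0 ≤ t) (hw : 0 ≤ w) :
    (c * t ^ n * w) ^ a = c ^ a * t ^ (n * a) * w ^ a := by
  rw [Real.mul_rpow (by positivity) hw, Real.mul_rpow hc (by positivity), ← Real.rpow_natCast,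
    ← Real.rpow_mul ht]

theorem rpow_mul_rpow_div_rpow {N c : ℝ} (hN : 0 < N) (hc : 0 < c) (a b : ℝ) (hab : a + b = 1) :
    N ^ a * c ^ b * (c / N) ^ a = c := by
  rw [Real.div_rpow hc.le hN.le, mul_right_comm, mul_div_cancel₀ _ (Real.rpow_pos_of_pos hN a).ne',
    ← Real.rpow_add hc, hab, Real.rpow_one]

theorem IKApprox_eq (m : ℕ) (κ : ℝ) {t w : ℝ} (ht : 0 ≤ t) (hw : 0 ≤ w) :
    IKApprox (m + 1) κ (omegaS (m + 1) / (m + 1 : ℕ) * t ^ (m + 1) * w) =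
      omegaS (m + 1) * t ^ m *
        (w ^ ((((m + 1 : ℕ) : ℝ) - 1) / (m + 1 : ℕ)) -
          ((((m + 1 : ℕ) : ℝ) - 1) * κ / (2 * (((m + 1 : ℕ) : ℝ) + 2))) * t ^ 2 *
            w ^ ((((m + 1 : ℕ) : ℝ) + 1) / (m + 1 : ℕ))) := by
  unfold IKApprox
  set N : ℝ := ((m + 1 : ℕ) : ℝ)
  set ω := omegaS (m + 1)
  have hN : 0 < N := by positivity
  have hω : 0 < ω := omegaS_pos m.add_one_ne_zero
  have h₁ := rpow_mul_rpow_div_rpow hN hω ((N - 1) / N) (1 / N) (by field_simp; ring)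
  have h₂ := rpow_mul_rpow_div_rpow hN hω ((N + 1) / N) (-(1 / N)) (by field_simp; ring)
  rw [Real.rpow_neg hω.le, ← div_eq_mul_inv] at h₂
  have e₁ : N * ((N - 1) / N) = (m : ℕ) := by field_simp; simp [N]
  have e₂ : N * ((N + 1) / N) = (m + 2 : ℕ) := by field_simp; simp [N]; ring
  rw [mul_pow_mul_rpow _ _ (by positivity) ht hw, mul_pow_mul_rpow _ _ (by positivity) ht hw,
    e₁, e₂, Real.rpow_natCast, Real.rpow_natCast, pow_add]
  linear_combination (t ^ m * w ^ ((N - 1) / N)) * h₁ -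
    ((N - 1) * κ / (2 * (N + 2)) * t ^ m * t ^ 2 * w ^ ((N + 1) / N)) * h₂

theorem AK_sub_IKApprox_VK_isBigO (m : ℕ) (κ : ℝ) :
    (fun t => AK (m + 1) κ t - IKApprox (m + 1) κ (VK (m + 1) κ t)) =O[𝓝[>] 0]
      fun t => t ^ (m + 4) := by
  set N : ℝ := ((m + 1 : ℕ) : ℝ)
  set ω := omegaS (m + 1)
  set w := VKRatio (m + 1) κ
  set b : ℝ := -((m + 1) * m * κ / (6 * (m + 3)))
  set q : ℝ := (N - 1) * κ / (2 * (N + 2))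
  have hle : 𝓝[>] (0 : ℝ) ≤ 𝓝[≠] 0 := nhdsWithin_mono _ fun t (ht : 0 < t) => ht.ne'
  have hs : Tendsto (fun t : ℝ => t ^ 2) (𝓝[>] 0) (𝓝 0) := tendsto_sq_nhdsNE_zero.mono_left hle
  have hw := (VKRatio_sub_isBigO m κ).mono hle
  have hw_pos : ∀ᶠ t in 𝓝[>] 0, 0 < w t :=
    ((tendsto_VKRatio m κ).mono_left hle).eventually (lt_mem_nhds one_pos)
  have hE₁ := rpow_sub_isBigO_of_sub_isBigO ((N - 1) / N) hs hw
  have hE₂ := rpow_sub_isBigO_of_sub_isBigO ((N + 1) / N) hs hw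
  have hbracket : (fun t => -(w t ^ ((N - 1) / N) - (1 + (N - 1) / N * b * t ^ 2)) +
      q * (t ^ 2 * (w t ^ ((N + 1) / N) - (1 + (N + 1) / N * b * t ^ 2))) +
      q * ((N + 1) / N) * b * (t ^ 2) ^ 2) =O[𝓝[>] 0] fun t => (t ^ 2) ^ 2 :=
    (hE₁.neg_left.add ((((hs.isBigO_one ℝ).mul hE₂).congr_right fun t => one_mul _).const_mul_left
      q)).add ((isBigO_refl _ _).const_mul_left _)
  have hsinK := (sinK_pow_sub_isBigO m κ).mono (nhdsWithin_le_nhds (s := Set.Ioi 0))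
  refine ((hsinK.add (((isBigO_refl (fun t : ℝ => t ^ m) _).mul hbracket).congr_right
    fun t => by ring)).const_mul_left ω).congr' ?_ (.of_forall fun t => rfl)
  filter_upwards [self_mem_nhdsWithin, hw_pos] with t (ht : 0 < t) hwt
  rw [VK_eq_mul_VKRatio m.add_one_ne_zero κ ht.ne', IKApprox_eq m κ ht.le hwt.le, AK,
    Nat.add_sub_cancel]
  -- the `t²` terms cancel: `-(n-1)κ/6 - ((n-1)/n) b + q = 0`
  simp only [N, b, q]
  push_cast
  field_simp
  ring

theorem pow_isBigO_VK_rpow (m : ℕ) (κ : ℝ) :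
    (fun t => t ^ (m + 4)) =O[𝓝[>] 0]
      fun t => VK (m + 1) κ t ^ ((((m + 1 : ℕ) : ℝ) + 3) / (m + 1 : ℕ)) := by
  set N : ℝ := ((m + 1 : ℕ) : ℝ)
  set γ : ℝ := (N + 3) / N
  set w := VKRatio (m + 1) κ
  have hle : 𝓝[>] (0 : ℝ) ≤ 𝓝[≠] 0 := nhdsWithin_mono _ fun t (ht : 0 < t) => ht.ne'
  have hw_lim := (tendsto_VKRatio m κ).mono_left hle
  have hlim : Tendsto (fun t => (w t ^ γ)⁻¹) (𝓝[>] 0) (𝓝 1) := by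
    simpa using (hw_lim.rpow_const (Or.inl one_ne_zero) (p := γ)).inv₀ (by simp)
  have hω := omegaS_pos m.add_one_ne_zero
  have hN : 0 < N := by positivity
  have eγ : N * γ = (m + 4 : ℕ) := by simp only [γ, N]; field_simp; push_cast; ring
  refine (((hlim.isBigO_one ℝ).mul (isBigO_refl (fun t => VK (m + 1) κ t ^ γ) _)).const_mul_left
    ((omegaS (m + 1) / N) ^ γ)⁻¹).congr' ?_ (.of_forall fun t => by simp)
  filter_upwards [self_mem_nhdsWithin, hw_lim.eventually (lt_mem_nhds one_pos)]
    with t (ht : 0 < t) hwt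
  rw [VK_eq_mul_VKRatio m.add_one_ne_zero κ ht.ne',
    mul_pow_mul_rpow _ _ (by positivity) ht.le hwt.le, eγ, Real.rpow_natCast]
  have hc : 0 < (omegaS (m + 1) / N) ^ γ := by positivity
  have hwγ : 0 < w t ^ γ := Real.rpow_pos_of_pos hwt γ
  field_simp
  rfl

/-- Taylor expansion of the model isoperimetric profile as `v → 0⁺`:
`I_κ(v) = n^{(n-1)/n}·ω_{n-1}^{1/n}·v^{(n-1)/n}
  - ((n-1)κ/(2(n+2)))·(n^{(n+1)/n}/ω_{n-1}^{1/n})·v^{(n+1)/n} + O(v^{(n+3)/n})`. -/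
theorem isoperimetric_profile_asymptotics (n : ℕ) (hn : 2 ≤ n) (κ : ℝ) :
    (fun v : ℝ =>
        IK n κ v -
          ((n : ℝ) ^ (((n : ℝ) - 1) / (n : ℝ)) * omegaS n ^ ((1 : ℝ) / (n : ℝ)) *
              v ^ (((n : ℝ) - 1) / (n : ℝ)) -
            (((n : ℝ) - 1) * κ / (2 * ((n : ℝ) + 2))) *
              ((n : ℝ) ^ (((n : ℝ) + 1) / (n : ℝ)) / omegaS n ^ ((1 : ℝ) / (n : ℝ))) *
              v ^ (((n : ℝ) + 1) / (n : ℝ))))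
      =O[nhdsWithin 0 (Set.Ioi 0)] fun v : ℝ => v ^ (((n : ℝ) + 3) / (n : ℝ)) := by
  obtain ⟨m, rfl⟩ := Nat.exists_eq_add_one_of_ne_zero (by omega : n ≠ 0)
  have hcomp := ((AK_sub_IKApprox_VK_isBigO m κ).trans (pow_isBigO_VK_rpow m κ)).comp_tendsto
    (tendsto_VKinv m.add_one_ne_zero κ)
  have hVK : ∀ᶠ v in 𝓝[>] 0, VK (m + 1) κ (VKinv (m + 1) κ v) = v :=
    (eventually_VKinv_mem_Ioo m.add_one_ne_zero κ one_pos).mono fun _ hv => hv.2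
  refine hcomp.congr' ?_ ?_ <;> filter_upwards [hVK] with v hv
  · simp only [Function.comp_apply, hv]
    rfl
  · simp only [Function.comp_apply, hv]
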